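/- For all natural numbers n and k, k' ≤ n, the column orthogonality relation Σ_{m=0}^{n} C(n, m, k) * C(n, k', m) equals 2^n if k = k' and 0 otherwise (i.e., the Kravchuk matrix K with entries K(k, m) = C(n, k, m) satisfies K² = 2^n · I). -/

import Mathlib

/-!
`C(n, k, m)` is the coefficient of `X ^ k` in `(1 - X) ^ m * (1 + X) ^ (n - m)`, which is the
image of `X ^ m` under the substitution `T p = (1 + X) ^ n * p ((1 - X) / (1 + X))` on polynomials
of degree at most `n`. So the column orthogonality says `T (T (X ^ k)) = 2 ^ n * X ^ k`. Since `T`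
is multiplicative with respect to degrees and sends `1 - X` to `2 * X` and `1 + X` to `2` in
degree one, `T ((1 - X) ^ k * (1 + X) ^ (n - k)) = (2 * X) ^ k * 2 ^ (n - k)`.
-/

open Finset

/-- Generalized binomial (Kravchuk) coefficient:
`C(n,k,m) = Σ_{l=0}^{m} (-1)^l * binom(n-m, k-l) * binom(m, l)`,
with the convention that the binomial vanishes for a negative lower index
(encoded by the `if l ≤ k` guard, since we use natural subtraction). -/
def kravC (n k m : ℕ) : ℤ :=
  ∑ l ∈ Finset.range (m + 1),
    (-1 : ℤ) ^ l * (if l ≤ k then ((n - m).choose (k - l) : ℤ) else 0) * (m.choose l : ℤ)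

namespace Polynomial
variable {R : Type*} [CommRing R]

theorem coeff_one_sub_X_pow (m l : ℕ) :
    ((1 - X : R[X]) ^ m).coeff l = (-1) ^ l * m.choose l := by
  induction m generalizing l with
  | zero => rcases l with _ | l <;> simp [coeff_one]
  | succ m ih =>
    rw [pow_succ, mul_sub, mul_one, coeff_sub]
    rcases l with _ | l
    · simpa using ih 0
    · rw [coeff_mul_X, ih, ih, Nat.choose_succ_succ']
      push_cast
      ring

/-- The substitution `p ↦ (1 + X) ^ n * p ((1 - X) / (1 + X))`, carried out on the degree `n`
homogenization of `p` so that no division occurs; coefficients of `p` above degree `n` are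
discarded. -/
noncomputable def kravchukTransform (n : ℕ) (p : R[X]) : R[X] :=
  MvPolynomial.aeval ![1 - X, 1 + X] (p.homogenize n)

theorem kravchukTransform_eq_sum (n : ℕ) (p : R[X]) :
    kravchukTransform n p =
      ∑ m ∈ range (n + 1), C (p.coeff m) * ((1 - X) ^ m * (1 + X) ^ (n - m)) := by
  rw [kravchukTransform, homogenize, map_sum, Nat.sum_antidiagonal_eq_sum_range_succ_mk]
  simp [MvPolynomial.aeval_monomial, Finsupp.prod_fintype, Fin.prod_univ_two]

theorem coeff_kravchukTransform (n : ℕ) (p : R[X]) (j : ℕ) :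
    (kravchukTransform n p).coeff j =
      ∑ m ∈ range (n + 1), p.coeff m * (((1 - X : R[X]) ^ m * (1 + X) ^ (n - m)).coeff j) := by
  simp only [kravchukTransform_eq_sum, finsetSum_coeff, coeff_C_mul]

theorem kravchukTransform_mul {p q : R[X]} {a b : ℕ} (hp : p.natDegree ≤ a)
    (hq : q.natDegree ≤ b) :
    kravchukTransform (a + b) (p * q) = kravchukTransform a p * kravchukTransform b q := by
  rw [kravchukTransform, homogenize_mul p q hp hq, map_mul]
  rfl

theorem kravchukTransform_pow {p : R[X]} {a : ℕ} (hp : p.natDegree ≤ a) (k : ℕ) :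
    kravchukTransform (k * a) (p ^ k) = kravchukTransform a p ^ k := by
  induction k with
  | zero => simp [kravchukTransform]
  | succ k ih =>
    rw [pow_succ, pow_succ, add_mul, one_mul, ← ih,
      kravchukTransform_mul (natDegree_pow_le_of_le k hp) hp]

theorem kravchukTransform_X_pow {m n : ℕ} (h : m ≤ n) :
    kravchukTransform n (X ^ m : R[X]) = (1 - X) ^ m * (1 + X) ^ (n - m) := by
  simp [kravchukTransform, homogenize_X_pow h]

theorem kravchukTransform_one_sub_X : kravchukTransform 1 (1 - X : R[X]) = 2 * X := by
  simp [kravchukTransform, homogenize_X]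
  ring

theorem kravchukTransform_one_add_X : kravchukTransform 1 (1 + X : R[X]) = 2 := by
  simp [kravchukTransform, homogenize_X]
  ring

theorem kravchukTransform_kravchukTransform_X_pow {k n : ℕ} (h : k ≤ n) :
    kravchukTransform n (kravchukTransform n (X ^ k : R[X])) = 2 ^ n * X ^ k := by
  have hsub : (1 - X : R[X]).natDegree ≤ 1 := by compute_degree
  have hadd : (1 + X : R[X]).natDegree ≤ 1 := by compute_degree
  calc kravchukTransform n (kravchukTransform n (X ^ k : R[X]))
      = kravchukTransform (k * 1 + (n - k) * 1) ((1 - X) ^ k * (1 + X) ^ (n - k)) := by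
        rw [kravchukTransform_X_pow h, mul_one, mul_one, Nat.add_sub_cancel' h]
    _ = (2 * X) ^ k * 2 ^ (n - k) := by
        rw [kravchukTransform_mul (natDegree_pow_le_of_le k hsub)
          (natDegree_pow_le_of_le _ hadd), kravchukTransform_pow hsub,
          kravchukTransform_pow hadd, kravchukTransform_one_sub_X, kravchukTransform_one_add_X]
    _ = 2 ^ n * X ^ k := by
        rw [mul_pow, mul_right_comm, ← pow_add, Nat.add_sub_cancel' h]

end Polynomial

open Polynomial

theorem kravC_eq_coeff (n k m : ℕ) :
    kravC n k m = ((1 - X : ℤ[X]) ^ m * (1 + X) ^ (n - m)).coeff k := by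
  set f : ℕ → ℤ := fun l ↦
    (-1) ^ l * (if l ≤ k then ((n - m).choose (k - l) : ℤ) else 0) * m.choose l
  have hm : ∑ l ∈ range (m + 1), f l = ∑ l ∈ range (m + k + 1), f l := by
    refine sum_subset (range_subset_range.2 (by omega)) fun l _ hl ↦ ?_
    rw [mem_range, not_lt] at hl
    simp [f, Nat.choose_eq_zero_of_lt (by omega : m < l)]
  have hk : ∑ l ∈ range (k + 1), f l = ∑ l ∈ range (m + k + 1), f l := by
    refine sum_subset (range_subset_range.2 (by omega)) fun l _ hl ↦ ?_
    rw [mem_range, not_lt] at hl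
    simp [f, if_neg (by omega : ¬l ≤ k)]
  rw [kravC, hm, ← hk, coeff_mul, Nat.sum_antidiagonal_eq_sum_range_succ_mk]
  refine sum_congr rfl fun l hl ↦ ?_
  simp [f, coeff_one_sub_X_pow, coeff_one_add_X_pow, Nat.lt_succ_iff.1 (mem_range.1 hl)]
  ring

theorem kravC_column_orthogonality_general (n k k' : ℕ) (hk : k ≤ n) :
    (∑ m ∈ Finset.range (n + 1), kravC n m k * kravC n k' m) =
      if k = k' then (2 : ℤ) ^ n else 0 := by
  calc (∑ m ∈ Finset.range (n + 1), kravC n m k * kravC n k' m)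
      = (kravchukTransform n (kravchukTransform n (X ^ k : ℤ[X]))).coeff k' := by
        simp only [coeff_kravchukTransform, kravchukTransform_X_pow hk, kravC_eq_coeff]
    _ = if k = k' then (2 : ℤ) ^ n else 0 := by
        rw [kravchukTransform_kravchukTransform_X_pow hk, ← map_ofNat C 2, ← C_pow,
          coeff_C_mul_X_pow]
        exact if_congr eq_comm rfl rfl

theorem kravC_column_orthogonality (n k k' : ℕ) (hk : k ≤ n) (hk' : k' ≤ n) :
    (∑ m ∈ Finset.range (n + 1), kravC n m k * kravC n k' m) =
      if k = k' then (2 : ℤ) ^ n else 0 :=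
  kravC_column_orthogonality_general n k k' hk
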